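/- Let F ⊆ K be finite fields with q = |F| and n = [K : F]. The number of normal elements of K over F, i.e. the number of η ∈ K whose conjugates η, η^q, …, η^{q^{n−1}} are linearly independent over F, equals Φ(xⁿ − 1), the number of units of the quotient ring F[x]/(xⁿ − 1). (Consequently the number of normal bases of K over F is Φ(xⁿ − 1)/n.) -/

import Mathlib

/-!
Let `φ` be the `q`-power Frobenius, an `F`-linear map of `K` with minimal polynomial `Xⁿ - 1`,
and view `K` as an `F[X]`-module with `X` acting by `φ`. An element `η` is normal exactly when it
generates this module. Since the minimal polynomial has degree `n = dim K`, the module is cyclic,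
i.e. isomorphic to `R = F[X]/(Xⁿ - 1)`, and under such an isomorphism the generators of `R` as a
module over itself are precisely its units.
-/

open Polynomial Module

namespace Module.AEval'

variable {𝕜 V : Type*} [Field 𝕜] [AddCommGroup V] [Module 𝕜 V] [FiniteDimensional 𝕜 V]
  (f : End 𝕜 V)

theorem restrictScalars_span_singleton_of (x : V) :
    (Submodule.span 𝕜[X] {of f x}).restrictScalars 𝕜 =
      (Submodule.span 𝕜 (Set.range fun i : Fin (finrank 𝕜 V) => (f ^ (i : ℕ)) x)).map
        (of f : V →ₗ[𝕜] AEval' f) := by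
  refine le_antisymm (fun m hm => ?_) ?_
  · obtain ⟨g, rfl⟩ := Submodule.mem_span_singleton.mp hm
    -- Cayley–Hamilton: `g` may be replaced by its remainder modulo the characteristic polynomial.
    rw [← AEval.of_aeval_smul, End.smul_def,
      ← aeval_modByMonic_eq_self_of_root (q := f.charpoly) f.aeval_self_charpoly]
    refine Submodule.mem_map_of_mem ?_
    set r := g %ₘ f.charpoly
    obtain hr | hr := eq_or_ne r 0
    · simp [hr]
    have hdeg : r.natDegree < finrank 𝕜 V := f.charpoly_natDegree ▸
      natDegree_lt_natDegree hr (degree_modByMonic_lt g f.charpoly_monic)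
    rw [aeval_eq_sum_range' hdeg, LinearMap.coe_sum, Finset.sum_apply, ← Fin.sum_univ_eq_sum_range]
    exact Submodule.sum_mem _ fun i _ => Submodule.smul_mem _ _ (Submodule.subset_span ⟨i, rfl⟩)
  · rw [Submodule.map_span, Submodule.span_le]
    rintro _ ⟨_, ⟨i, rfl⟩, rfl⟩
    show of f ((f ^ (i : ℕ)) x) ∈ _
    rw [← End.smul_def, ← X_pow_smul_of]
    exact Submodule.smul_mem _ _ (Submodule.mem_span_singleton_self _)

theorem span_singleton_of_eq_top_iff_linearIndependent (x : V) :
    Submodule.span 𝕜[X] {of f x} = ⊤ ↔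
      LinearIndependent 𝕜 (fun i : Fin (finrank 𝕜 V) => (f ^ (i : ℕ)) x) := by
  rw [← Submodule.restrictScalars_eq_top_iff 𝕜, restrictScalars_span_singleton_of,
    Submodule.map_eq_top_iff]
  exact ⟨fun h => linearIndependent_of_top_le_span_of_card_eq_finrank h.ge (Fintype.card_fin _),
    fun h => h.span_eq_top_of_card_eq_finrank' (Fintype.card_fin _)⟩

theorem nonempty_quotient_span_minpoly_linearEquiv
    (h : (minpoly 𝕜 f).natDegree = finrank 𝕜 V) :
    Nonempty ((𝕜[X] ⧸ Ideal.span {minpoly 𝕜 f}) ≃ₗ[𝕜[X]] AEval' f) := by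
  -- Over the PID `𝕜[X]` some vector has the same annihilator as the whole module; it then
  -- generates, because both sides have dimension `deg (minpoly 𝕜 f)`.
  obtain ⟨x, hx⟩ := exists_ker_toSpanSingleton_eq_annihilator 𝕜[X] (AEval' f)
  rw [← span_minpoly_eq_annihilator] at hx
  set g := (Ideal.span {minpoly 𝕜 f}).liftQ _ hx.ge
  have hinj : Function.Injective g :=
    LinearMap.ker_eq_bot.mp (Submodule.ker_liftQ_eq_bot' _ _ hx.symm)
  have : FiniteDimensional 𝕜 (𝕜[X] ⧸ Ideal.span {minpoly 𝕜 f}) :=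
    (AdjoinRoot.powerBasis (minpoly.ne_zero (Algebra.IsIntegral.isIntegral (R := 𝕜) f))).finite
  have hsurj : Function.Surjective (g.restrictScalars 𝕜) :=
    (LinearMap.injective_iff_surjective_of_finrank_eq_finrank
      (by rw [finrank_quotient_span_eq_natDegree, h]; rfl)).mp hinj
  exact ⟨.ofBijective g ⟨hinj, hsurj⟩⟩

end Module.AEval'

theorem Submodule.span_singleton_eq_top_iff_isUnit_of_surjective {R A : Type*} [CommSemiring R]
    [CommSemiring A] [Algebra R A] (hsurj : Function.Surjective (algebraMap R A)) (a : A) :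
    span R {a} = ⊤ ↔ IsUnit a := by
  rw [← restrictScalars_span R A hsurj, restrictScalars_eq_top_iff, Ideal.span_singleton_eq_top]

theorem LinearEquiv.span_singleton_apply_eq_top_iff {R M N : Type*} [Semiring R] [AddCommMonoid M]
    [AddCommMonoid N] [Module R M] [Module R N] (e : M ≃ₗ[R] N) (m : M) :
    Submodule.span R {e m} = ⊤ ↔ Submodule.span R {m} = ⊤ := by
  rw [← Set.image_singleton, ← LinearEquiv.coe_coe, ← Submodule.map_span, Submodule.map_eq_top_iff]

theorem FiniteField.frobeniusAlgHom_pow_apply (K R : Type*) [Field K] [Fintype K] [CommRing R]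
    [Algebra K R] (i : ℕ) (x : R) :
    ((frobeniusAlgHom K R).toLinearMap ^ i) x = x ^ Fintype.card K ^ i := by
  rw [End.coe_pow, AlgHom.coe_toLinearMap, coe_frobeniusAlgHom, pow_iterate]

/-- The number of normal elements of `K` over `F` (elements whose conjugates
`η, η^q, …, η^{q^{n−1}}` are linearly independent over `F`) equals `Φ(xⁿ − 1)`, the
number of units of the quotient ring `F[x]/(xⁿ − 1)`. -/
theorem stmt13 (F K : Type*) [Field F] [Fintype F] [Field K] [Fintype K] [Algebra F K]
    (n : ℕ) (hn : Module.finrank F K = n) :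
    Set.ncard {η : K | LinearIndependent F (fun i : Fin n => η ^ Fintype.card F ^ (i : ℕ))}
      = Nat.card (Polynomial F ⧸ Ideal.span {(X : Polynomial F) ^ n - 1})ˣ := by
  subst hn
  set φ := (FiniteField.frobeniusAlgHom F K).toLinearMap
  have hmin := FiniteField.minpoly_frobeniusAlgHom F K
  obtain ⟨e⟩ := AEval'.nonempty_quotient_span_minpoly_linearEquiv φ
    (by rw [hmin, ← C_1, natDegree_X_pow_sub_C])
  rw [hmin] at e
  let Φ : K ≃ F[X] ⧸ Ideal.span {(X : F[X]) ^ finrank F K - 1} :=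
    (AEval'.of φ).toEquiv.trans e.symm.toEquiv
  have hnormal : {η : K | LinearIndependent F fun i : Fin (finrank F K) =>
      η ^ Fintype.card F ^ (i : ℕ)} = Φ ⁻¹' Set.range Units.val := by
    ext η
    simp only [← FiniteField.frobeniusAlgHom_pow_apply, Set.mem_ofPred_eq,
      ← AEval'.span_singleton_of_eq_top_iff_linearIndependent]
    rw [← e.symm.span_singleton_apply_eq_top_iff,
      Submodule.span_singleton_eq_top_iff_isUnit_of_surjective Ideal.Quotient.mk_surjective]
    rfl
  rw [hnormal, Set.ncard_preimage_of_injective_subset_range Φ.injective (by simp),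
    Set.ncard_range_of_injective Units.val_injective]
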